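/- Let B : ℝ² → M₂(ℂ) be smooth, Λ_h-periodic, Hermitian-valued, and satisfy conj(B(−x)) = −B(x) for all x ∈ ℝ² (so that L^B anti-commutes with PC). Let k ∈ ℝ², let Φ₁ : ℝ² → ℂ be smooth and k-pseudoperiodic, and set Φ₂(x) = conj(Φ₁(−x)). Then: (i) ∫_{Ω_h} conj(Φ₁)(L^B Φ₂) dx = 0; (ii) the number θ = ∫_{Ω_h} conj(Φ₁)(L^B Φ₁) dx is real, and ∫_{Ω_h} conj(Φ₂)(L^B Φ₂) dx = −θ. -/

import Mathlib

open Matrix MeasureTheory Complex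

noncomputable section

abbrev V2 : Type := Fin 2 → ℝ
abbrev M2 : Type := Matrix (Fin 2) (Fin 2) ℂ

/-- Partial derivative in coordinate direction `i`. -/
noncomputable def pd (i : Fin 2) (f : V2 → ℂ) (x : V2) : ℂ :=
  fderiv ℝ f x (Pi.single i 1)

/-- The divergence-form operator `L^A f = -∑ ∂_i (a_{ij} ∂_j f)`. -/
noncomputable def LA (A : V2 → M2) (f : V2 → ℂ) (x : V2) : ℂ :=
  -∑ i : Fin 2, ∑ j : Fin 2, pd i (fun y => A y i j * pd j f y) x

/-- Lattice basis vector `v₁ = (√3/2, 1/2)`. -/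
def v1 : V2 := ![Real.sqrt 3 / 2, 1 / 2]

/-- Lattice basis vector `v₂ = (√3/2, -1/2)`. -/
def v2 : V2 := ![Real.sqrt 3 / 2, -(1 / 2)]

/-- `Λ_h`-periodicity of a matrix-valued function. -/
def perM (A : V2 → M2) : Prop := ∀ x : V2, ∀ m n : ℤ, A (x + m • v1 + n • v2) = A x

/-- `k`-pseudoperiodicity: `f(x + v) = e^{i k·v} f(x)` for all lattice vectors `v`. -/
def pseudoPer (k : V2) (f : V2 → ℂ) : Prop :=
  ∀ x : V2, ∀ m n : ℤ,
    f (x + m • v1 + n • v2) =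
      Complex.exp (Complex.I * ((k ⬝ᵥ ((m • v1 + n • v2 : V2)) : ℝ) : ℂ)) * f x

/-- The fundamental cell `Ω_h = {t₁ v₁ + t₂ v₂ : 0 ≤ t₁, t₂ ≤ 1}`. -/
def Ωh : Set V2 :=
  {y | ∃ t1 t2 : ℝ, t1 ∈ Set.Icc (0:ℝ) 1 ∧ t2 ∈ Set.Icc (0:ℝ) 1 ∧ y = t1 • v1 + t2 • v2}

/-! ### Basic facts about `pd` -/

lemma pd_contDiff {f : V2 → ℂ} (hf : ContDiff ℝ (⊤ : ℕ∞) f) (i : Fin 2) : ContDiff ℝ (⊤ : ℕ∞) (pd i f) :=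
  (hf.fderiv_right (m := (⊤ : ℕ∞)) (by simp)).clm_apply contDiff_const

lemma contDiff_conj {f : V2 → ℂ} (hf : ContDiff ℝ (⊤ : ℕ∞) f) :
    ContDiff ℝ (⊤ : ℕ∞) (fun x => (starRingEnd ℂ) (f x)) := by
  have : (fun x => (starRingEnd ℂ) (f x)) = ((RCLike.conjCLE (K := ℂ)) : ℂ →L[ℝ] ℂ) ∘ f := rfl
  rw [this]
  exact ((RCLike.conjCLE (K := ℂ)) : ℂ →L[ℝ] ℂ).contDiff.comp hf

lemma pd_conj {f : V2 → ℂ} {x : V2} (hf : DifferentiableAt ℝ f x) (i : Fin 2) :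
    pd i (fun y => (starRingEnd ℂ) (f y)) x = (starRingEnd ℂ) (pd i f x) := by
  have h : HasFDerivAt (fun y => (starRingEnd ℂ) (f y))
      (((RCLike.conjCLE (K := ℂ)) : ℂ →L[ℝ] ℂ).comp (fderiv ℝ f x)) x :=
    ((RCLike.conjCLE (K := ℂ)).hasFDerivAt).comp x hf.hasFDerivAt
  rw [pd, h.fderiv]
  simp [pd, RCLike.conjCLE_apply]

lemma pd_mul {f g : V2 → ℂ} {x : V2} (hf : DifferentiableAt ℝ f x)
    (hg : DifferentiableAt ℝ g x) (i : Fin 2) :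
    pd i (fun y => f y * g y) x = pd i f x * g x + f x * pd i g x := by
  rw [pd, fderiv_fun_mul hf hg]
  simp only [ContinuousLinearMap.add_apply, ContinuousLinearMap.smul_apply, smul_eq_mul, pd]
  ring

lemma pd_comp_neg {f : V2 → ℂ} {x : V2} (hf : DifferentiableAt ℝ f (-x)) (i : Fin 2) :
    pd i (fun y => f (-y)) x = -pd i f (-x) := by
  have h : HasFDerivAt (fun y : V2 => f (-y))
      ((fderiv ℝ f (-x)).comp (-(ContinuousLinearMap.id ℝ V2))) x :=
    hf.hasFDerivAt.comp x (hasFDerivAt_id x).neg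
  rw [pd, h.fderiv]
  simp [pd]

lemma pd_comp_add {f : V2 → ℂ} {x v : V2} (hf : DifferentiableAt ℝ f (x + v)) (i : Fin 2) :
    pd i (fun y => f (y + v)) x = pd i f (x + v) := by
  have h : HasFDerivAt (fun y : V2 => f (y + v))
      ((fderiv ℝ f (x + v)).comp (ContinuousLinearMap.id ℝ V2)) x :=
    hf.hasFDerivAt.comp x ((hasFDerivAt_id x).add_const v)
  rw [pd, h.fderiv]
  simp [pd]

lemma pd_const_mul {f : V2 → ℂ} {x : V2} (c : ℂ) (hf : DifferentiableAt ℝ f x) (i : Fin 2) :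
    pd i (fun y => c * f y) x = c * pd i f x := by
  rw [pd, fderiv_const_mul hf]
  simp [pd]

lemma shift_pd {f : V2 → ℂ} (hf : Differentiable ℝ f) {w : V2} {c : ℂ}
    (h : ∀ x, f (x + w) = c * f x) (j : Fin 2) (x : V2) :
    pd j f (x + w) = c * pd j f x := by
  have h1 : pd j (fun y => f (y + w)) x = pd j f (x + w) := pd_comp_add (hf _) j
  have h2 : (fun y => f (y + w)) = fun y => c * f y := funext h
  rw [← h1, h2, pd_const_mul c (hf x) j]

/-! ### Divergence theorem on the unit box -/

lemma box (F0 F1 : V2 → ℂ) (h0 : ContDiff ℝ (⊤ : ℕ∞) F0) (h1 : ContDiff ℝ (⊤ : ℕ∞) F1)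
    (hp0 : ∀ t, F0 (t + Pi.single 0 1) = F0 t) (hp1 : ∀ t, F1 (t + Pi.single 1 1) = F1 t) :
    ∫ t in Set.Icc (0:V2) 1, (pd 0 F0 t + pd 1 F1 t) = 0 := by
  set L : (ℝ × ℝ) ≃L[ℝ] V2 := (ContinuousLinearEquiv.finTwoArrow ℝ ℝ).symm with hL
  have hL10 : L ((1:ℝ),(0:ℝ)) = Pi.single (0 : Fin 2) 1 := by funext i; fin_cases i <;> rfl
  have hL01 : L ((0:ℝ),(1:ℝ)) = Pi.single (1 : Fin 2) 1 := by funext i; fin_cases i <;> rfl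
  set f : ℝ × ℝ → ℂ := fun p => F0 (L p) with hf
  set g : ℝ × ℝ → ℂ := fun p => F1 (L p) with hg
  set f' : ℝ × ℝ → (ℝ × ℝ →L[ℝ] ℂ) := fun p => (fderiv ℝ F0 (L p)).comp (L : ℝ × ℝ →L[ℝ] V2)
    with hf'
  set g' : ℝ × ℝ → (ℝ × ℝ →L[ℝ] ℂ) := fun p => (fderiv ℝ F1 (L p)).comp (L : ℝ × ℝ →L[ℝ] V2)
    with hg'
  have hdf : ∀ p : ℝ × ℝ, HasFDerivAt f (f' p) p := fun p =>
    (h0.differentiable (by simp) (L p)).hasFDerivAt.comp p L.hasFDerivAt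
  have hdg : ∀ p : ℝ × ℝ, HasFDerivAt g (g' p) p := fun p =>
    (h1.differentiable (by simp) (L p)).hasFDerivAt.comp p L.hasFDerivAt
  have hcont : Continuous fun p => f' p (1, 0) + g' p (0, 1) := by
    have c0 : Continuous fun x : V2 => fderiv ℝ F0 x (Pi.single 0 1) :=
      ((((h0.fderiv_right (m := (⊤ : ℕ∞)) (by simp))).clm_apply contDiff_const).continuous)
    have c1 : Continuous fun x : V2 => fderiv ℝ F1 x (Pi.single 1 1) :=
      ((((h1.fderiv_right (m := (⊤ : ℕ∞)) (by simp))).clm_apply contDiff_const).continuous)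
    have : (fun p => f' p (1, 0) + g' p (0, 1)) =
        fun p => fderiv ℝ F0 (L p) (Pi.single 0 1) + fderiv ℝ F1 (L p) (Pi.single 1 1) := by
      funext p
      simp [hf', hg', hL10, hL01]
    rw [this]
    exact ((c0.comp L.continuous).add (c1.comp L.continuous))
  have hle : ((0:ℝ),(0:ℝ)) ≤ ((1:ℝ),(1:ℝ)) := by constructor <;> norm_num
  have hdiv := integral_divergence_prod_Icc_of_hasFDerivAt_off_countable_of_le f g f' g'
    ((0:ℝ),(0:ℝ)) ((1:ℝ),(1:ℝ)) hle ∅ Set.countable_empty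
    ((h0.continuous.comp L.continuous).continuousOn)
    ((h1.continuous.comp L.continuous).continuousOn)
    (fun p _ => hdf p) (fun p _ => hdg p)
    (hcont.integrableOn_Icc)
  have hb1 : (∫ x in (0:ℝ)..1, g (x, 1)) = ∫ x in (0:ℝ)..1, g (x, 0) := by
    refine intervalIntegral.integral_congr fun x _ => ?_
    have : L (x, (1:ℝ)) = L (x, (0:ℝ)) + Pi.single 1 1 := by
      funext i; fin_cases i <;> simp [hL] <;> rfl
    simp only [hg, this, hp1]
  have hb2 : (∫ y in (0:ℝ)..1, f (1, y)) = ∫ y in (0:ℝ)..1, f (0, y) := by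
    refine intervalIntegral.integral_congr fun y _ => ?_
    have : L ((1:ℝ), y) = L ((0:ℝ), y) + Pi.single 0 1 := by
      funext i; fin_cases i <;> simp [hL] <;> rfl
    simp only [hf, this, hp0]
  rw [hb1, hb2] at hdiv
  simp only [sub_self, add_zero, zero_add, zero_sub, add_neg_cancel] at hdiv
  have emb := (MeasurableEquiv.finTwoArrow (α := ℝ)).measurableEmbedding
  have mp : MeasurePreserving (MeasurableEquiv.finTwoArrow (α := ℝ)) volume volume :=
    volume_preserving_finTwoArrow ℝ
  have hpre : (MeasurableEquiv.finTwoArrow (α := ℝ)) ⁻¹' (Set.Icc ((0:ℝ),(0:ℝ)) ((1:ℝ),(1:ℝ)))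
      = Set.Icc (0:V2) 1 := by
    ext t
    simp [MeasurableEquiv.finTwoArrow, Prod.le_def, Pi.le_def, Fin.forall_fin_two]
  have key := mp.setIntegral_preimage_emb emb
    (fun p => f' p (1, 0) + g' p (0, 1)) (Set.Icc ((0:ℝ),(0:ℝ)) ((1:ℝ),(1:ℝ)))
  rw [hpre] at key
  have heq : ∀ t : V2, f' (MeasurableEquiv.finTwoArrow t) (1,0)
      + g' (MeasurableEquiv.finTwoArrow t) (0,1) = pd 0 F0 t + pd 1 F1 t := by
    intro t
    have hLt : L (t 0, t 1) = t := by funext i; fin_cases i <;> rfl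
    simp [hf', hg', hL10, hL01, hLt, pd, MeasurableEquiv.finTwoArrow]
  calc ∫ t in Set.Icc (0:V2) 1, (pd 0 F0 t + pd 1 F1 t)
      = ∫ t in Set.Icc (0:V2) 1,
          (f' (MeasurableEquiv.finTwoArrow t) (1,0) + g' (MeasurableEquiv.finTwoArrow t) (0,1)) := by
        simp only [heq]
    _ = ∫ y in Set.Icc ((0:ℝ),(0:ℝ)) ((1:ℝ),(1:ℝ)), (f' y (1, 0) + g' y (0, 1)) := key
    _ = 0 := hdiv

/-! ### The linear change of variables -/

def Tclm : V2 →L[ℝ] V2 :=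
  (ContinuousLinearMap.proj (R := ℝ) (φ := fun _ : Fin 2 => ℝ) 0).smulRight v1 +
  (ContinuousLinearMap.proj (R := ℝ) (φ := fun _ : Fin 2 => ℝ) 1).smulRight v2

lemma Tclm_apply (t : V2) : Tclm t = t 0 • v1 + t 1 • v2 := rfl

lemma Tclm_single0 : Tclm (Pi.single (0 : Fin 2) (1:ℝ)) = v1 := by
  rw [Tclm_apply]; simp

lemma Tclm_single1 : Tclm (Pi.single (1 : Fin 2) (1:ℝ)) = v2 := by
  rw [Tclm_apply]; simp

lemma sqrt3_pos : (0:ℝ) < Real.sqrt 3 := Real.sqrt_pos.2 (by norm_num)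

lemma single0_eq : (Pi.single (0 : Fin 2) (1:ℝ) : V2) = (Real.sqrt 3)⁻¹ • (v1 + v2) := by
  funext i
  fin_cases i <;> simp [v1, v2, Pi.single_apply]

lemma single1_eq : (Pi.single (1 : Fin 2) (1:ℝ) : V2) = v1 - v2 := by
  funext i
  fin_cases i <;> simp [v1, v2, Pi.single_apply] <;> norm_num

lemma Ωh_eq : Ωh = Tclm '' Set.Icc (0:V2) 1 := by
  ext y
  constructor
  · rintro ⟨t1, t2, h1, h2, rfl⟩
    refine ⟨![t1, t2], ?_, ?_⟩
    · constructor <;> intro i <;> fin_cases i <;>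
        simp [h1.1, h1.2, h2.1, h2.2]
    · rw [Tclm_apply]; simp
  · rintro ⟨t, ht, rfl⟩
    exact ⟨t 0, t 1, ⟨ht.1 0, ht.2 0⟩, ⟨ht.1 1, ht.2 1⟩, by rw [Tclm_apply]⟩

lemma Tclm_inj : Function.Injective Tclm := by
  intro t s h
  have h0 := congrFun h 0
  have h1 := congrFun h 1
  simp only [Tclm_apply, Pi.add_apply, Pi.smul_apply, v1, v2, smul_eq_mul] at h0 h1
  simp only [Matrix.cons_val_zero, Matrix.cons_val_one, Matrix.head_cons] at h0 h1
  funext i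
  fin_cases i
  · show t 0 = s 0
    nlinarith [h0, h1, sqrt3_pos]
  · show t 1 = s 1
    nlinarith [h0, h1, sqrt3_pos]

lemma Ωh_compact : IsCompact Ωh := by
  rw [Ωh_eq]; exact (isCompact_Icc).image Tclm.continuous

lemma pd_comp_Tclm {f : V2 → ℂ} (hf : ContDiff ℝ (⊤ : ℕ∞) f) (a : Fin 2) (t : V2) :
    pd a (fun s => f (Tclm s)) t = fderiv ℝ f (Tclm t) (Tclm (Pi.single a 1)) := by
  have h : HasFDerivAt (fun s => f (Tclm s)) ((fderiv ℝ f (Tclm t)).comp Tclm) t :=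
    (hf.differentiable (by simp) (Tclm t)).hasFDerivAt.comp t Tclm.hasFDerivAt
  rw [pd, h.fderiv]; rfl

/-- KEY: the integral of any partial derivative of a smooth `Λ_h`-periodic function
over the fundamental cell vanishes. -/
lemma key {f : V2 → ℂ} (hf : ContDiff ℝ (⊤ : ℕ∞) f) (hp1 : ∀ x, f (x + v1) = f x)
    (hp2 : ∀ x, f (x + v2) = f x) (i : Fin 2) : ∫ x in Ωh, pd i f x = 0 := by
  have hmeas : MeasurableSet (Set.Icc (0:V2) 1) := measurableSet_Icc
  have hderiv : ∀ t ∈ Set.Icc (0:V2) 1, HasFDerivWithinAt Tclm Tclm (Set.Icc (0:V2) 1) t :=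
    fun t _ => Tclm.hasFDerivAt.hasFDerivWithinAt
  have hinj : Set.InjOn Tclm (Set.Icc (0:V2) 1) := Tclm_inj.injOn
  rw [Ωh_eq, integral_image_eq_integral_abs_det_fderiv_smul volume hmeas hderiv hinj
    (fun x => pd i f x)]
  simp only [integral_smul]
  have hFT : ContDiff ℝ (⊤ : ℕ∞) (fun t => f (Tclm t)) := hf.comp Tclm.contDiff
  have hperT0 : ∀ t, f (Tclm (t + Pi.single 0 1)) = f (Tclm t) := by
    intro t; rw [_root_.map_add, Tclm_single0]; exact hp1 _
  have hperT1 : ∀ t, f (Tclm (t + Pi.single 1 1)) = f (Tclm t) := by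
    intro t; rw [_root_.map_add, Tclm_single1]; exact hp2 _
  have hbox : ∫ t in Set.Icc (0:V2) 1,
      (pd 0 (fun s => f (Tclm s)) t + pd 1 (fun s => f (Tclm s)) t) = 0 :=
    box _ _ hFT hFT hperT0 hperT1
  have hbox' : ∫ t in Set.Icc (0:V2) 1,
      (pd 0 (fun s => f (Tclm s)) t + pd 1 (fun s => -f (Tclm s)) t) = 0 :=
    box (fun s => f (Tclm s)) (fun s => -f (Tclm s)) hFT hFT.neg hperT0
      (fun t => by simp only [hperT1])
  fin_cases i
  · show |Tclm.det| • ∫ a in Set.Icc (0:V2) 1, pd 0 f (Tclm a) = 0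
    have heq : ∀ t : V2, pd 0 f (Tclm t) =
        (Real.sqrt 3)⁻¹ • (pd 0 (fun s => f (Tclm s)) t + pd 1 (fun s => f (Tclm s)) t) := by
      intro t
      rw [pd_comp_Tclm hf 0 t, pd_comp_Tclm hf 1 t, Tclm_single0, Tclm_single1]
      rw [pd, single0_eq, ContinuousLinearMap.map_smul, ContinuousLinearMap.map_add]
    simp only [heq, integral_smul, hbox, smul_zero]
  · show |Tclm.det| • ∫ a in Set.Icc (0:V2) 1, pd 1 f (Tclm a) = 0
    have heq : ∀ t : V2, pd 1 f (Tclm t) =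
        pd 0 (fun s => f (Tclm s)) t + pd 1 (fun s => -f (Tclm s)) t := by
      intro t
      have hneg : pd 1 (fun s => -f (Tclm s)) t = -pd 1 (fun s => f (Tclm s)) t := by
        rw [pd, pd, fderiv_fun_neg]
        simp
      rw [pd_comp_Tclm hf 0 t, hneg, pd_comp_Tclm hf 1 t, Tclm_single0, Tclm_single1]
      rw [pd, single1_eq, ContinuousLinearMap.map_sub]
      ring
    simp only [heq, hbox', smul_zero]

/-! ### Translation / reflection invariance of integrals over the cell -/

lemma int_neg_eq {p : V2 → ℂ} (hper : ∀ x, p (x + (v1 + v2)) = p x) :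
    ∫ x in Ωh, p (-x) = ∫ x in Ωh, p x := by
  have emb_neg : MeasurableEmbedding (fun x : V2 => -x) :=
    (MeasurableEquiv.neg V2).measurableEmbedding
  have mp_neg : MeasurePreserving (fun x : V2 => -x) (volume : Measure V2) volume :=
    Measure.measurePreserving_neg volume
  have h1 := mp_neg.setIntegral_preimage_emb emb_neg p ((fun x : V2 => -x) ⁻¹' Ωh)
  have hne : (fun x : V2 => -x) ⁻¹' ((fun x : V2 => -x) ⁻¹' Ωh) = Ωh := by
    ext x; simp
  rw [hne] at h1
  have hset : ((fun x : V2 => -x) ⁻¹' Ωh) = ((fun x : V2 => x + (v1 + v2)) ⁻¹' Ωh) := by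
    ext x
    simp only [Set.mem_preimage, Ωh, Set.mem_setOf_eq]
    constructor
    · rintro ⟨t1, t2, h1, h2, he⟩
      refine ⟨1 - t1, 1 - t2, ⟨by linarith [h1.2], by linarith [h1.1]⟩,
        ⟨by linarith [h2.2], by linarith [h2.1]⟩, ?_⟩
      have hx : x = -(t1 • v1 + t2 • v2) := by rw [← he, neg_neg]
      rw [hx]; module
    · rintro ⟨t1, t2, h1, h2, he⟩
      refine ⟨1 - t1, 1 - t2, ⟨by linarith [h1.2], by linarith [h1.1]⟩,
        ⟨by linarith [h2.2], by linarith [h2.1]⟩, ?_⟩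
      have hx : x = t1 • v1 + t2 • v2 - (v1 + v2) := by rw [← he]; abel
      rw [hx]; module
  rw [hset] at h1
  have h2 := (measurePreserving_add_right (volume : Measure V2) (v1 + v2)).setIntegral_preimage_emb
    (MeasurableEquiv.addRight (v1 + v2)).measurableEmbedding p Ωh
  simp only [hper] at h2
  exact h1.trans h2

/-! ### Divergence-form building blocks -/

noncomputable def wf (A : V2 → M2) (f : V2 → ℂ) (i j : Fin 2) : V2 → ℂ :=
  fun y => A y i j * pd j f y

lemma LA_eq (A : V2 → M2) (f : V2 → ℂ) (x : V2) :
    LA A f x = -∑ i : Fin 2, ∑ j : Fin 2, pd i (wf A f i j) x := rfl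

noncomputable def uf (A : V2 → M2) (f g : V2 → ℂ) (i j : Fin 2) : V2 → ℂ :=
  fun y => (starRingEnd ℂ) (f y) * wf A g i j y

lemma wf_contDiff {A : V2 → M2} {f : V2 → ℂ} (hA : ∀ i j, ContDiff ℝ (⊤ : ℕ∞) fun x => A x i j)
    (hf : ContDiff ℝ (⊤ : ℕ∞) f) (i j : Fin 2) : ContDiff ℝ (⊤ : ℕ∞) (wf A f i j) :=
  (hA i j).mul (pd_contDiff hf j)

lemma uf_contDiff {A : V2 → M2} {f g : V2 → ℂ} (hA : ∀ i j, ContDiff ℝ (⊤ : ℕ∞) fun x => A x i j)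
    (hf : ContDiff ℝ (⊤ : ℕ∞) f) (hg : ContDiff ℝ (⊤ : ℕ∞) g) (i j : Fin 2) : ContDiff ℝ (⊤ : ℕ∞) (uf A f g i j) :=
  (contDiff_conj hf).mul (wf_contDiff hA hg i j)

lemma LA_contDiff {A : V2 → M2} {f : V2 → ℂ} (hA : ∀ i j, ContDiff ℝ (⊤ : ℕ∞) fun x => A x i j)
    (hf : ContDiff ℝ (⊤ : ℕ∞) f) : ContDiff ℝ (⊤ : ℕ∞) (LA A f) := by
  have : LA A f = fun x => -∑ i : Fin 2, ∑ j : Fin 2, pd i (wf A f i j) x := rfl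
  rw [this]
  exact (ContDiff.sum fun i _ => ContDiff.sum fun j _ =>
    pd_contDiff (wf_contDiff hA hf i j) i).neg

/-- The main pointwise "integration-by-parts" identity. -/
lemma pointwise_main {A : V2 → M2} {f g : V2 → ℂ} {x : V2}
    (hA : ∀ i j, ContDiff ℝ (⊤ : ℕ∞) fun y => A y i j) (hherm : (A x).IsHermitian)
    (hf : ContDiff ℝ (⊤ : ℕ∞) f) (hg : ContDiff ℝ (⊤ : ℕ∞) g) :
    (starRingEnd ℂ) (g x) * LA A f x - (starRingEnd ℂ) ((starRingEnd ℂ) (f x) * LA A g x)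
      = ∑ i : Fin 2, ∑ j : Fin 2,
          (pd i (fun y => (starRingEnd ℂ) (uf A f g i j y)) x - pd i (uf A g f i j) x) := by
  have hpdu : ∀ (p q : V2 → ℂ), ContDiff ℝ (⊤ : ℕ∞) p → ContDiff ℝ (⊤ : ℕ∞) q → ∀ i j : Fin 2,
      pd i (uf A p q i j) x
        = (starRingEnd ℂ) (pd i p x) * (A x i j * pd j q x)
          + (starRingEnd ℂ) (p x) * pd i (wf A q i j) x := by
    intro p q hp hq i j
    have h1 : pd i (uf A p q i j) x = pd i (fun y => (starRingEnd ℂ) (p y)) x * wf A q i j x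
        + (starRingEnd ℂ) (p x) * pd i (wf A q i j) x :=
      pd_mul ((contDiff_conj hp).differentiable (by simp) x)
        ((wf_contDiff hA hq i j).differentiable (by simp) x) i
    rw [h1, pd_conj (hp.differentiable (by simp) x)]
    rfl
  have hcu : ∀ i j : Fin 2, pd i (fun y => (starRingEnd ℂ) (uf A f g i j y)) x
      = (starRingEnd ℂ) (pd i (uf A f g i j) x) :=
    fun i j => pd_conj ((uf_contDiff hA hf hg i j).differentiable (by simp) x) i
  have hh : ∀ i j : Fin 2, (starRingEnd ℂ) (A x i j) = A x j i := by
    intro i j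
    rw [starRingEnd_apply]
    exact hherm.apply j i
  simp only [LA_eq, hcu, hpdu f g hf hg, hpdu g f hg hf, Fin.sum_univ_two,
    _root_.map_add, _root_.map_sub, _root_.map_mul, _root_.map_neg, Complex.conj_conj, hh]
  ring

set_option maxHeartbeats 1000000 in
/-- For `L^B` anti-commuting with `PC` (`conj(B(-x)) = -B(x)`) and
`Φ₂ = PC Φ₁`: `⟨Φ₁, L^B Φ₂⟩ = 0`, `θ = ⟨Φ₁, L^B Φ₁⟩` is real, and `⟨Φ₂, L^B Φ₂⟩ = -θ`. -/
theorem LB_anti_PC_matrix_elements (B : V2 → M2)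
    (hsm : ∀ i j, ContDiff ℝ (⊤ : ℕ∞) fun x => B x i j)
    (hper : perM B)
    (hherm : ∀ x : V2, (B x).IsHermitian)
    (hanti : ∀ x : V2, (B (-x)).map (starRingEnd ℂ) = -(B x))
    (k : V2) (Φ₁ : V2 → ℂ)
    (h1sm : ContDiff ℝ (⊤ : ℕ∞) Φ₁) (h1p : pseudoPer k Φ₁)
    (Φ₂ : V2 → ℂ) (hΦ₂ : Φ₂ = fun x => starRingEnd ℂ (Φ₁ (-x))) :
    (∫ x in Ωh, starRingEnd ℂ (Φ₁ x) * LA B Φ₂ x) = 0 ∧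
    (∫ x in Ωh, starRingEnd ℂ (Φ₁ x) * LA B Φ₁ x).im = 0 ∧
    (∫ x in Ωh, starRingEnd ℂ (Φ₂ x) * LA B Φ₂ x) =
      -(∫ x in Ωh, starRingEnd ℂ (Φ₁ x) * LA B Φ₁ x) := by
  classical
  have h1d : Differentiable ℝ Φ₁ := h1sm.differentiable (by simp)
  have h2sm : ContDiff ℝ (⊤ : ℕ∞) Φ₂ := by
    rw [hΦ₂]; exact contDiff_conj (h1sm.comp (contDiff_id.neg))
  have h2d : Differentiable ℝ Φ₂ := h2sm.differentiable (by simp)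
  -- integrability on the (compact) cell
  have intg : ∀ {h : V2 → ℂ}, Continuous h → IntegrableOn h Ωh volume :=
    fun hc => hc.continuousOn.integrableOn_compact Ωh_compact
  -- the unimodular phases
  set ee : V2 → ℂ := fun w => Complex.exp (Complex.I * ((k ⬝ᵥ w : ℝ) : ℂ)) with hee
  have he_conj : ∀ w, (starRingEnd ℂ) (ee w) = ee (-w) := by
    intro w
    rw [hee]
    simp only
    rw [← Complex.exp_conj]
    congr 1
    simp only [_root_.map_mul, Complex.conj_I, Complex.conj_ofReal, dotProduct_neg]
    push_cast
    ring
  have he_mul : ∀ w w', ee w * ee w' = ee (w + w') := by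
    intro w w'
    rw [hee]
    simp only
    rw [← Complex.exp_add]
    congr 1
    rw [dotProduct_add]
    push_cast
    ring
  have huni : ∀ w, (starRingEnd ℂ) (ee w) * ee w = 1 := by
    intro w
    rw [he_conj, he_mul, neg_add_cancel]
    simp [hee]
  -- lattice vectors
  have hv10 : ((1:ℤ) • v1 + (0:ℤ) • v2 : V2) = v1 := by simp
  have hv01 : ((0:ℤ) • v1 + (1:ℤ) • v2 : V2) = v2 := by simp
  have hv11 : ((1:ℤ) • v1 + (1:ℤ) • v2 : V2) = v1 + v2 := by simp
  -- shifts of the data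
  have hΦ1s : ∀ (m n : ℤ) (x : V2), Φ₁ (x + (m • v1 + n • v2)) = ee (m • v1 + n • v2) * Φ₁ x := by
    intro m n x; rw [← add_assoc]; exact h1p x m n
  have sΦ1 : ∀ w, (∃ m n : ℤ, (m • v1 + n • v2 : V2) = w) → ∀ x, Φ₁ (x + w) = ee w * Φ₁ x := by
    rintro w ⟨m, n, rfl⟩ x; exact hΦ1s m n x
  have hBs : ∀ w, (∃ m n : ℤ, (m • v1 + n • v2 : V2) = w) → ∀ x, B (x + w) = B x := by
    rintro w ⟨m, n, rfl⟩ x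
    have := hper x m n
    rwa [add_assoc] at this
  have sΦ2 : ∀ w, (∃ m n : ℤ, (m • v1 + n • v2 : V2) = w) → ∀ x, Φ₂ (x + w) = ee w * Φ₂ x := by
    rintro w ⟨m, n, rfl⟩ x
    have hneg : -(x + (m • v1 + n • v2)) = (-x) + ((-m) • v1 + (-n) • v2) := by
      simp only [neg_add, neg_smul]
    rw [hΦ₂]
    simp only
    rw [hneg, hΦ1s (-m) (-n) (-x), _root_.map_mul]
    have : (starRingEnd ℂ) (ee ((-m) • v1 + (-n) • v2)) = ee (m • v1 + n • v2) := by
      rw [he_conj]; congr 1; simp only [neg_add, neg_smul, neg_neg]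
    rw [this]
  -- shifts of the w-functions and of LA Φ₁
  have swf : ∀ (q : V2 → ℂ), ContDiff ℝ (⊤ : ℕ∞) q →
      (∀ w, (∃ m n : ℤ, (m • v1 + n • v2 : V2) = w) → ∀ x, q (x + w) = ee w * q x) →
      ∀ w, (∃ m n : ℤ, (m • v1 + n • v2 : V2) = w) → ∀ i j x,
        wf B q i j (x + w) = ee w * wf B q i j x := by
    intro q hq sq w hw i j x
    show B (x + w) i j * pd j q (x + w) = ee w * (B x i j * pd j q x)
    rw [hBs w hw x, shift_pd (hq.differentiable (by simp)) (sq w hw) j x]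
    ring
  have sLA1 : ∀ w, (∃ m n : ℤ, (m • v1 + n • v2 : V2) = w) → ∀ x,
      LA B Φ₁ (x + w) = ee w * LA B Φ₁ x := by
    intro w hw x
    have hd : ∀ i j : Fin 2, pd i (wf B Φ₁ i j) (x + w) = ee w * pd i (wf B Φ₁ i j) x :=
      fun i j => shift_pd ((wf_contDiff hsm h1sm i j).differentiable (by simp))
        (fun y => swf Φ₁ h1sm sΦ1 w hw i j y) i x
    simp only [LA_eq, Fin.sum_univ_two, hd]
    ring
  -- vanishing of divergence integrals of the u-functions
  have KeyU : ∀ (p q : V2 → ℂ), ContDiff ℝ (⊤ : ℕ∞) p → ContDiff ℝ (⊤ : ℕ∞) q →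
      (∀ w, (∃ m n : ℤ, (m • v1 + n • v2 : V2) = w) → ∀ x, p (x + w) = ee w * p x) →
      (∀ w, (∃ m n : ℤ, (m • v1 + n • v2 : V2) = w) → ∀ x, q (x + w) = ee w * q x) →
      ∀ i j a : Fin 2, (∫ x in Ωh, pd a (uf B p q i j) x = 0) ∧
        (∫ x in Ωh, pd a (fun y => (starRingEnd ℂ) (uf B p q i j y)) x = 0) := by
    intro p q hp hq sp sq i j a
    have hu_sm : ContDiff ℝ (⊤ : ℕ∞) (uf B p q i j) := uf_contDiff hsm hp hq i j
    have hshift : ∀ w, (∃ m n : ℤ, (m • v1 + n • v2 : V2) = w) →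
        ∀ x, uf B p q i j (x + w) = uf B p q i j x := by
      intro w hw x
      show (starRingEnd ℂ) (p (x + w)) * wf B q i j (x + w)
          = (starRingEnd ℂ) (p x) * wf B q i j x
      rw [sp w hw x, swf q hq sq w hw i j x, _root_.map_mul]
      linear_combination ((starRingEnd ℂ) (p x) * wf B q i j x) * huni w
    have h1 := hshift v1 ⟨1, 0, hv10⟩
    have h2 := hshift v2 ⟨0, 1, hv01⟩
    refine ⟨key hu_sm h1 h2 a, key (contDiff_conj hu_sm) ?_ ?_ a⟩
    · intro x; simp only [h1 x]
    · intro x; simp only [h2 x]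
  -- splitting of the divergence integral
  have Hsplit : ∀ (F : Fin 2 → Fin 2 → V2 → ℂ), (∀ i j, Continuous (F i j)) →
      (∀ i j, (∫ x in Ωh, F i j x) = 0) →
      ∫ x in Ωh, (∑ i : Fin 2, ∑ j : Fin 2, F i j x) = 0 := by
    intro F hc hz
    rw [integral_finset_sum _ (fun i _ => intg (continuous_finset_sum _ fun j _ => hc i j))]
    refine Finset.sum_eq_zero fun i _ => ?_
    rw [integral_finset_sum _ (fun j _ => intg (hc i j))]
    exact Finset.sum_eq_zero fun j _ => hz i j
  -- smoothness of the integrands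
  have hLA1sm := LA_contDiff hsm h1sm
  have hLA2sm := LA_contDiff hsm h2sm
  have hI1sm : ContDiff ℝ (⊤ : ℕ∞) fun x => (starRingEnd ℂ) (Φ₁ x) * LA B Φ₁ x :=
    (contDiff_conj h1sm).mul hLA1sm
  -- Part (ii): the conjugate of θ equals θ
  have Z11 := KeyU Φ₁ Φ₁ h1sm h1sm sΦ1 sΦ1
  have hzero2 : ∫ x in Ωh, ((starRingEnd ℂ) (Φ₁ x) * LA B Φ₁ x
      - (starRingEnd ℂ) ((starRingEnd ℂ) (Φ₁ x) * LA B Φ₁ x)) = 0 := by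
    have hpt : ∀ x : V2, (starRingEnd ℂ) (Φ₁ x) * LA B Φ₁ x
        - (starRingEnd ℂ) ((starRingEnd ℂ) (Φ₁ x) * LA B Φ₁ x)
        = ∑ i : Fin 2, ∑ j : Fin 2,
            (pd i (fun y => (starRingEnd ℂ) (uf B Φ₁ Φ₁ i j y)) x - pd i (uf B Φ₁ Φ₁ i j) x) :=
      fun x => pointwise_main hsm (hherm x) h1sm h1sm
    simp only [hpt]
    refine Hsplit _ (fun i j => ?_) (fun i j => ?_)
    · exact ((pd_contDiff (contDiff_conj (uf_contDiff hsm h1sm h1sm i j)) i).continuous).sub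
        ((pd_contDiff (uf_contDiff hsm h1sm h1sm i j) i).continuous)
    · rw [integral_sub
        (intg (pd_contDiff (contDiff_conj (uf_contDiff hsm h1sm h1sm i j)) i).continuous)
        (intg (pd_contDiff (uf_contDiff hsm h1sm h1sm i j) i).continuous),
        (Z11 i j i).2, (Z11 i j i).1, sub_zero]
  have hθconj : (starRingEnd ℂ) (∫ x in Ωh, (starRingEnd ℂ) (Φ₁ x) * LA B Φ₁ x)
      = ∫ x in Ωh, (starRingEnd ℂ) (Φ₁ x) * LA B Φ₁ x := by
    have h := hzero2
    rw [integral_sub (intg hI1sm.continuous) (intg (contDiff_conj hI1sm).continuous),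
      integral_conj] at h
    exact (sub_eq_zero.mp h).symm
  -- LA B Φ₂ in terms of LA B Φ₁
  have hpdΦ2 : ∀ (j : Fin 2) (y : V2), pd j Φ₂ y = -(starRingEnd ℂ) (pd j Φ₁ (-y)) := by
    intro j y
    rw [hΦ₂]
    have hdn : DifferentiableAt ℝ (fun z : V2 => Φ₁ (-z)) y :=
      (h1d (-y)).comp y (differentiable_id.neg).differentiableAt
    rw [pd_conj hdn j, pd_comp_neg (h1d (-y)) j, _root_.map_neg]
  have hbneg : ∀ (i j : Fin 2) (y : V2), (starRingEnd ℂ) (B (-y) i j) = -(B y i j) := by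
    intro i j y
    have h := congrFun (congrFun (hanti y) i) j
    simpa [Matrix.map_apply, Matrix.neg_apply] using h
  have hwrel : ∀ (i j : Fin 2), wf B Φ₂ i j = fun y => (starRingEnd ℂ) (wf B Φ₁ i j (-y)) := by
    intro i j
    funext y
    show B y i j * pd j Φ₂ y = (starRingEnd ℂ) (B (-y) i j * pd j Φ₁ (-y))
    rw [hpdΦ2 j y, _root_.map_mul, hbneg i j y]
    ring
  have hLA2 : ∀ x, LA B Φ₂ x = -(starRingEnd ℂ) (LA B Φ₁ (-x)) := by
    intro x
    have hui : ∀ i j : Fin 2, pd i (wf B Φ₂ i j) x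
        = -(starRingEnd ℂ) (pd i (wf B Φ₁ i j) (-x)) := by
      intro i j
      rw [hwrel i j]
      have hdn : DifferentiableAt ℝ (fun y : V2 => wf B Φ₁ i j (-y)) x :=
        ((wf_contDiff hsm h1sm i j).differentiable (by simp) (-x)).comp x
          (differentiable_id.neg).differentiableAt
      rw [pd_conj hdn i, pd_comp_neg ((wf_contDiff hsm h1sm i j).differentiable (by simp) (-x)) i,
        _root_.map_neg]
    simp only [LA_eq, Fin.sum_univ_two, hui, _root_.map_add, _root_.map_neg, neg_neg]
    ring
  -- Part (i)
  have hp_per : ∀ x, (starRingEnd ℂ) (Φ₂ (x + (v1 + v2))) * LA B Φ₁ (x + (v1 + v2))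
      = (starRingEnd ℂ) (Φ₂ x) * LA B Φ₁ x := by
    intro x
    rw [sΦ2 (v1+v2) ⟨1,1,hv11⟩ x, sLA1 (v1+v2) ⟨1,1,hv11⟩ x, _root_.map_mul]
    linear_combination ((starRingEnd ℂ) (Φ₂ x) * LA B Φ₁ x) * huni (v1+v2)
  have hA_eq : (∫ x in Ωh, (starRingEnd ℂ) (Φ₁ x) * LA B Φ₂ x)
      = -(starRingEnd ℂ) (∫ x in Ωh, (starRingEnd ℂ) (Φ₂ x) * LA B Φ₁ x) := by
    have hpt1 : ∀ x : V2, (starRingEnd ℂ) (Φ₁ x) * LA B Φ₂ x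
        = -(starRingEnd ℂ) ((fun y => (starRingEnd ℂ) (Φ₂ y) * LA B Φ₁ y) (-x)) := by
      intro x
      simp only
      rw [hLA2 x, _root_.map_mul]
      have h2x : (starRingEnd ℂ) ((starRingEnd ℂ) (Φ₂ (-x))) = Φ₂ (-x) := Complex.conj_conj _
      rw [h2x, hΦ₂]
      simp only [neg_neg]
      ring
    calc (∫ x in Ωh, (starRingEnd ℂ) (Φ₁ x) * LA B Φ₂ x)
        = ∫ x in Ωh, -(starRingEnd ℂ) ((fun y => (starRingEnd ℂ) (Φ₂ y) * LA B Φ₁ y) (-x)) := by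
          simp only [hpt1]
      _ = -(starRingEnd ℂ) (∫ x in Ωh, (starRingEnd ℂ) (Φ₂ x) * LA B Φ₁ x) := by
          rw [integral_neg, integral_conj]
          exact congrArg (fun z => -(starRingEnd ℂ) z)
            (int_neg_eq (p := fun y => (starRingEnd ℂ) (Φ₂ y) * LA B Φ₁ y) hp_per)
  have Z12 := KeyU Φ₁ Φ₂ h1sm h2sm sΦ1 sΦ2
  have Z21 := KeyU Φ₂ Φ₁ h2sm h1sm sΦ2 sΦ1
  have hC_eq : (∫ x in Ωh, (starRingEnd ℂ) (Φ₂ x) * LA B Φ₁ x)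
      = (starRingEnd ℂ) (∫ x in Ωh, (starRingEnd ℂ) (Φ₁ x) * LA B Φ₂ x) := by
    rw [← integral_conj, ← sub_eq_zero,
      ← integral_sub (intg ((contDiff_conj h2sm).mul hLA1sm).continuous)
        (intg (contDiff_conj ((contDiff_conj h1sm).mul hLA2sm)).continuous)]
    have hpt : ∀ x : V2, (starRingEnd ℂ) (Φ₂ x) * LA B Φ₁ x
        - (starRingEnd ℂ) ((starRingEnd ℂ) (Φ₁ x) * LA B Φ₂ x)
        = ∑ i : Fin 2, ∑ j : Fin 2,
            (pd i (fun y => (starRingEnd ℂ) (uf B Φ₁ Φ₂ i j y)) x - pd i (uf B Φ₂ Φ₁ i j) x) :=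
      fun x => pointwise_main hsm (hherm x) h1sm h2sm
    simp only [hpt]
    refine Hsplit _ (fun i j => ?_) (fun i j => ?_)
    · exact ((pd_contDiff (contDiff_conj (uf_contDiff hsm h1sm h2sm i j)) i).continuous).sub
        ((pd_contDiff (uf_contDiff hsm h2sm h1sm i j) i).continuous)
    · rw [integral_sub
        (intg (pd_contDiff (contDiff_conj (uf_contDiff hsm h1sm h2sm i j)) i).continuous)
        (intg (pd_contDiff (uf_contDiff hsm h2sm h1sm i j) i).continuous),
        (Z12 i j i).2, (Z21 i j i).1, sub_zero]
  have hA_zero : (∫ x in Ωh, (starRingEnd ℂ) (Φ₁ x) * LA B Φ₂ x) = 0 := by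
    have h := hA_eq
    rw [hC_eq, Complex.conj_conj] at h
    linear_combination h / 2
  -- Part (iii)
  have hI1per : ∀ x, (starRingEnd ℂ) (Φ₁ (x + (v1 + v2))) * LA B Φ₁ (x + (v1 + v2))
      = (starRingEnd ℂ) (Φ₁ x) * LA B Φ₁ x := by
    intro x
    rw [sΦ1 (v1+v2) ⟨1,1,hv11⟩ x, sLA1 (v1+v2) ⟨1,1,hv11⟩ x, _root_.map_mul]
    linear_combination ((starRingEnd ℂ) (Φ₁ x) * LA B Φ₁ x) * huni (v1+v2)
  have hthird : (∫ x in Ωh, (starRingEnd ℂ) (Φ₂ x) * LA B Φ₂ x)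
      = -(∫ x in Ωh, (starRingEnd ℂ) (Φ₁ x) * LA B Φ₁ x) := by
    have hpt3 : ∀ x : V2, (starRingEnd ℂ) (Φ₂ x) * LA B Φ₂ x
        = -(starRingEnd ℂ) ((fun y => (starRingEnd ℂ) (Φ₁ y) * LA B Φ₁ y) (-x)) := by
      intro x
      simp only
      rw [hLA2 x, _root_.map_mul, hΦ₂]
      simp only [Complex.conj_conj, neg_neg]
      ring
    calc (∫ x in Ωh, (starRingEnd ℂ) (Φ₂ x) * LA B Φ₂ x)
        = ∫ x in Ωh, -(starRingEnd ℂ) ((fun y => (starRingEnd ℂ) (Φ₁ y) * LA B Φ₁ y) (-x)) := by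
          simp only [hpt3]
      _ = -(starRingEnd ℂ) (∫ x in Ωh, (starRingEnd ℂ) (Φ₁ x) * LA B Φ₁ x) := by
          rw [integral_neg, integral_conj]
          exact congrArg (fun z => -(starRingEnd ℂ) z)
            (int_neg_eq (p := fun y => (starRingEnd ℂ) (Φ₁ y) * LA B Φ₁ y) hI1per)
      _ = -(∫ x in Ωh, (starRingEnd ℂ) (Φ₁ x) * LA B Φ₁ x) := by rw [hθconj]
  exact ⟨hA_zero, Complex.conj_eq_iff_im.mp hθconj, hthird⟩
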